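/- Let k ≥ 2 and n ≥ 2(k−1). The graph obtained from the complete bipartite graph K_{⌈(n)/2⌉,⌊n/2⌋} by adding a copy of K_{k−1,k−1} inside one side (i.e., making a set of 2(k−1) vertices in one partition class induce a complete bipartite graph K_{k−1,k−1}) contains no copy of the friendship graph K₁ + kK₂. -/
import Mathlib


def ContainsCopy {α β : Type*} (H : SimpleGraph α) (G : SimpleGraph β) : Prop :=
  ∃ f : α → β, Function.Injective f ∧ ∀ a b, H.Adj a b → G.Adj (f a) (f b)

def friendshipGraph (k : ℕ) : SimpleGraph (Fin 1 ⊕ Fin (2 * k)) :=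
  SimpleGraph.fromRel (fun x y => match x, y with
    | Sum.inl _, Sum.inr _ => True
    | Sum.inr a, Sum.inr b => (a : ℕ) / 2 = (b : ℕ) / 2
    | _, _ => False)

lemma key_aux {V : Type*} [Fintype V] {k : ℕ} (hk : 2 ≤ k) (S : Set V)
    (hS : S.ncard = k - 1) (a b : Fin k → V)
    (hab : ∀ i j : Fin k, (a i = a j ∨ a i = b j ∨ b i = a j ∨ b i = b j) → i = j)
    (hmem : ∀ i, a i ∈ S ∨ b i ∈ S) : False := by
  classical
  set g : Fin k → V := fun i => if a i ∈ S then a i else b i with hg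
  have hgS : ∀ i, g i ∈ S := by
    intro i
    by_cases h : a i ∈ S
    · simp [hg, h]
    · simpa [hg, h] using (hmem i).resolve_left h
  have hginj : Function.Injective g := by
    intro i j hij
    apply hab i j
    by_cases h1 : a i ∈ S <;> by_cases h2 : a j ∈ S <;> simp [hg, h1, h2] at hij <;> tauto
  have h1 : (Finset.univ.image g).card = k := by
    rw [Finset.card_image_of_injective _ hginj, Finset.card_univ, Fintype.card_fin]
  have h2 : Finset.univ.image g ⊆ S.toFinset := by
    intro x hx
    simp only [Finset.mem_image] at hx
    obtain ⟨i, _, hi⟩ := hx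
    rw [Set.mem_toFinset]
    exact hi ▸ hgS i
  have h3 := Finset.card_le_card h2
  rw [h1, Set.ncard_eq_toFinset_card'] at *
  omega

theorem construction_friendship_free {V : Type*} [Fintype V] (G : SimpleGraph V)
    (k n : ℕ) (hk : 2 ≤ k) (hcard : Fintype.card V = n) (hn : 2 * (k - 1) ≤ n)
    (X S1 S2 : Set V) (hS1 : S1 ⊆ X) (hS2 : S2 ⊆ X) (hdisj : Disjoint S1 S2)
    (hc1 : S1.ncard = k - 1) (hc2 : S2.ncard = k - 1)
    (hadj : ∀ u v : V, G.Adj u v ↔ u ≠ v ∧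
      ((u ∈ X ↔ v ∉ X) ∨ (u ∈ S1 ∧ v ∈ S2) ∨ (u ∈ S2 ∧ v ∈ S1))) :
    ¬ ContainsCopy (friendshipGraph k) G := by
  classical
  rintro ⟨f, hinj, hmap⟩
  set c : V := f (Sum.inl 0) with hc
  set a : Fin k → V := fun i => f (Sum.inr ⟨2 * i, by omega⟩) with ha
  set b : Fin k → V := fun i => f (Sum.inr ⟨2 * i + 1, by omega⟩) with hb
  -- basic adjacencies
  have hA : ∀ i : Fin k, G.Adj c (a i) := by
    intro i
    apply hmap
    constructor
    · simp
    · exact Or.inl trivial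
  have hB : ∀ i : Fin k, G.Adj c (b i) := by
    intro i
    apply hmap
    constructor
    · simp
    · exact Or.inl trivial
  have hE : ∀ i : Fin k, G.Adj (a i) (b i) := by
    intro i
    apply hmap
    constructor
    · simp only [ne_eq, Sum.inr.injEq, Fin.mk.injEq]
      omega
    · exact Or.inl (by show (2 * (i : ℕ)) / 2 = (2 * (i : ℕ) + 1) / 2; omega)
  -- injectivity data
  have hab : ∀ i j : Fin k, (a i = a j ∨ a i = b j ∨ b i = a j ∨ b i = b j) → i = j := by
    intro i j h
    rcases h with h | h | h | h <;>
    · have := hinj h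
      simp only [Sum.inr.injEq, Fin.mk.injEq] at this
      exact Fin.ext (by omega)
  -- a pair of leaves cannot both be outside X
  have hpair : ∀ i : Fin k, a i ∈ X ∨ b i ∈ X := by
    intro i
    by_contra h
    push_neg at h
    obtain ⟨haX, hbX⟩ := h
    have := (hadj _ _).1 (hE i)
    rcases this.2 with h | h | h
    · tauto
    · exact haX (hS1 h.1)
    · exact haX (hS2 h.1)
  by_cases hcX : c ∈ X
  · by_cases hcS1 : c ∈ S1
    · -- each pair has a vertex in S2
      apply key_aux hk S2 hc2 a b hab
      intro i
      have hda : a i ∉ X ∨ a i ∈ S2 := by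
        have := (hadj _ _).1 (hA i)
        rcases this.2 with h | h | h
        · exact Or.inl (h.1 hcX)
        · exact Or.inr h.2
        · exact absurd (Set.disjoint_left.mp hdisj hcS1 h.1) (fun h => h)
      have hdb : b i ∉ X ∨ b i ∈ S2 := by
        have := (hadj _ _).1 (hB i)
        rcases this.2 with h | h | h
        · exact Or.inl (h.1 hcX)
        · exact Or.inr h.2
        · exact absurd (Set.disjoint_left.mp hdisj hcS1 h.1) (fun h => h)
      rcases hpair i with h | h
      · exact Or.inl (hda.resolve_left (by tauto))
      · exact Or.inr (hdb.resolve_left (by tauto))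
    · by_cases hcS2 : c ∈ S2
      · -- each pair has a vertex in S1
        apply key_aux hk S1 hc1 a b hab
        intro i
        have hda : a i ∉ X ∨ a i ∈ S1 := by
          have := (hadj _ _).1 (hA i)
          rcases this.2 with h | h | h
          · exact Or.inl (h.1 hcX)
          · exact absurd (Set.disjoint_right.mp hdisj hcS2 h.1) (fun h => h)
          · exact Or.inr h.2
        have hdb : b i ∉ X ∨ b i ∈ S1 := by
          have := (hadj _ _).1 (hB i)
          rcases this.2 with h | h | h
          · exact Or.inl (h.1 hcX)
          · exact absurd (Set.disjoint_right.mp hdisj hcS2 h.1) (fun h => h)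
          · exact Or.inr h.2
        rcases hpair i with h | h
        · exact Or.inl (hda.resolve_left (by tauto))
        · exact Or.inr (hdb.resolve_left (by tauto))
      · -- c ∈ X but in neither S1 nor S2: all leaves outside X, contradiction
        have i0 : Fin k := ⟨0, by omega⟩
        have haX : a i0 ∉ X := by
          have := (hadj _ _).1 (hA i0)
          rcases this.2 with h | h | h
          · exact h.1 hcX
          · exact absurd h.1 hcS1
          · exact absurd h.1 hcS2
        have hbX : b i0 ∉ X := by
          have := (hadj _ _).1 (hB i0)
          rcases this.2 with h | h | h
          · exact h.1 hcX
          · exact absurd h.1 hcS1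
          · exact absurd h.1 hcS2
        rcases hpair i0 with h | h
        · exact haX h
        · exact hbX h
  · -- c ∉ X: all leaves in X, each edge gives a vertex of S1
    apply key_aux hk S1 hc1 a b hab
    intro i
    have haX : a i ∈ X := by
      have := (hadj _ _).1 (hA i)
      rcases this.2 with h | h | h
      · by_contra hx; exact hcX (h.2 hx)
      · exact absurd (hS1 h.1) hcX
      · exact absurd (hS2 h.1) hcX
    have hbX : b i ∈ X := by
      have := (hadj _ _).1 (hB i)
      rcases this.2 with h | h | h
      · by_contra hx; exact hcX (h.2 hx)
      · exact absurd (hS1 h.1) hcX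
      · exact absurd (hS2 h.1) hcX
    have := (hadj _ _).1 (hE i)
    rcases this.2 with h | h | h
    · tauto
    · exact Or.inl h.1
    · exact Or.inr h.2
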